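/- arXiv:2201.09556 — 4 statements merged into one kernel-verified Lean document; each statement's English description precedes it below -/
import Mathlib

section
/- For all finite words u and v over a finite alphabet, |PL(u) − PL(v)| ≤ PL(uv) (Saarela's inequality). -/
/-- A palindrome: a word equal to its reversal. -/
def IsPal {α : Type*} (w : List α) : Prop := w.reverse = w

/-- Palindromic length: the minimal number of palindromes whose concatenation is `w`. -/
noncomputable def PL {α : Type*} (w : List α) : ℕ :=
  sInf {k | ∃ l : List (List α), l.length = k ∧ (∀ p ∈ l, IsPal p) ∧ l.flatten = w}

/-!
The heart of the proof is that appending a palindrome `p` lowers the palindromic length by at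
most one: `PL v ≤ PL (v ++ p) + 1`. Take an optimal factorization of `v ++ p` with last factor
`q`. If `q = t ++ p` overlaps `v`, then `t ++ p = p ++ t.reverse` makes `t` conjugate to its
reversal, so `t` is a product of two palindromes and `v` needs at most one more factor.
Otherwise `p = a ++ b ++ q` with `a`, `b` palindromes, `PL (v ++ a ++ b) ≤ PL (v ++ p) - 1`, and
induction on the length, applied to `v ++ a` with `b` and then to `v` with `a`, finishes.
Appending the factors of an optimal factorization of `w` one at a time gives
`PL v ≤ PL (v ++ w) + PL w`; the other half of the inequality is the same statement for the
reversed words.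
-/

namespace List

variable {α : Type*}

theorem exists_eq_append_and_eq_append_of_append_eq_append {x y z : List α}
    (h : x ++ z = z ++ y) : ∃ a b, x = a ++ b ∧ y = b ++ a := by
  induction hn : z.length using Nat.strong_induction_on generalizing z with
  | _ n ih =>
  rcases x.eq_nil_or_concat with rfl | ⟨_, _, rfl⟩
  · exact ⟨[], [], rfl, by simpa using h⟩
  rcases append_eq_append_iff.mp h with ⟨z', rfl, hz'⟩ | ⟨b, hx, hy⟩
  · exact ih z'.length (by simp [← hn]; omega) hz' rfl
  · exact ⟨z, b, hx, hy⟩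

end List

section

variable {α : Type*}

theorem exists_isPal_isPal_of_isPal_append {t p : List α} (hp : IsPal p)
    (htp : IsPal (t ++ p)) : ∃ a b, IsPal a ∧ IsPal b ∧ t = a ++ b := by
  have h : t ++ p = p ++ t.reverse := by
    conv_lhs => rw [← htp]
    rw [List.reverse_append, hp]
  obtain ⟨a, b, rfl, hba⟩ := List.exists_eq_append_and_eq_append_of_append_eq_append h
  have hrev : b.reverse ++ a.reverse = b ++ a := by rw [← List.reverse_append, hba]
  obtain ⟨hb, ha⟩ := List.append_inj hrev (by simp)
  exact ⟨a, b, ha, hb, rfl⟩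

theorem PL_le_length_of_flatten_eq {w : List α} {l : List (List α)} (hl : ∀ p ∈ l, IsPal p)
    (hw : l.flatten = w) : PL w ≤ l.length :=
  Nat.sInf_le ⟨l, rfl, hl, hw⟩

theorem exists_flatten_eq_length_eq_PL (w : List α) :
    ∃ l : List (List α), l.length = PL w ∧ (∀ p ∈ l, IsPal p) ∧ l.flatten = w :=
  Nat.sInf_mem
    (s := {k | ∃ l : List (List α), l.length = k ∧ (∀ p ∈ l, IsPal p) ∧ l.flatten = w})
    ⟨_, w.map ([·]), rfl,
    fun p hp => by obtain ⟨a, -, rfl⟩ := List.mem_map.mp hp; rfl,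
    by induction w <;> simp [*]⟩

theorem PL_le_PL_append_add_one (v : List α) {p : List α} (hp : IsPal p) :
    PL v ≤ PL (v ++ p) + 1 := by
  induction hn : (v ++ p).length using Nat.strong_induction_on generalizing v p with
  | _ n ih =>
  obtain ⟨l, hl, hpal, hflat⟩ := exists_flatten_eq_length_eq_PL (v ++ p)
  rcases l.eq_nil_or_concat with rfl | ⟨L, q, rfl⟩
  · obtain ⟨rfl, -⟩ := List.append_eq_nil_iff.mp hflat.symm
    have : PL ([] : List α) ≤ 0 := PL_le_length_of_flatten_eq (l := []) (by simp) rfl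
    omega
  have hq : IsPal q := hpal q (by simp)
  have hL : ∀ r ∈ L, IsPal r := fun r hr => hpal r (by simp [hr])
  have hlen : L.length + 1 = PL (v ++ p) := by simpa using hl
  rcases List.append_eq_append_iff.mp (by simpa using hflat : L.flatten ++ q = v ++ p) with
    ⟨t, hv, rfl⟩ | ⟨w, hLw, rfl⟩
  · obtain ⟨a, b, ha, hb, rfl⟩ := exists_isPal_isPal_of_isPal_append hp hq
    have hv' : PL v ≤ (L ++ [a, b]).length :=
      PL_le_length_of_flatten_eq (by simpa [or_imp, forall_and] using ⟨hL, ha, hb⟩)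
        (by simp [hv])
    simp only [List.length_append, List.length_cons, List.length_nil] at hv'
    omega
  · obtain ⟨a, b, ha, hb, rfl⟩ := exists_isPal_isPal_of_isPal_append hq hp
    have hq_ne : q ≠ [] := by
      rintro rfl
      have : PL (v ++ (a ++ b ++ [])) ≤ L.length :=
        PL_le_length_of_flatten_eq hL (by simpa using hLw)
      omega
    have hq_pos := List.length_pos_iff.mpr hq_ne
    have hab : PL (v ++ a ++ b) ≤ L.length :=
      PL_le_length_of_flatten_eq hL (by rw [hLw, List.append_assoc])
    have hb' := ih _ (by simp [← hn]; omega) (v ++ a) hb rfl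
    have ha' := ih _ (by simp [← hn]; omega) v ha rfl
    omega

theorem PL_le_PL_append_flatten_add_length (v : List α) {l : List (List α)}
    (hl : ∀ p ∈ l, IsPal p) : PL v ≤ PL (v ++ l.flatten) + l.length := by
  induction l generalizing v with
  | nil => simp
  | cons q l ih =>
    have hq := PL_le_PL_append_add_one v (hl q (by simp))
    have hl' := ih (v ++ q) (fun p hp => hl p (by simp [hp]))
    simp only [List.flatten_cons, List.length_cons, ← List.append_assoc]
    omega

theorem PL_le_PL_append_add_PL (v w : List α) : PL v ≤ PL (v ++ w) + PL w := by
  obtain ⟨l, hl, hpal, rfl⟩ := exists_flatten_eq_length_eq_PL w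
  simpa [hl] using PL_le_PL_append_flatten_add_length v hpal

theorem PL_reverse_le (w : List α) : PL w.reverse ≤ PL w := by
  obtain ⟨l, hl, hpal, rfl⟩ := exists_flatten_eq_length_eq_PL w
  have hmap : l.map List.reverse = l := (List.map_congr_left hpal).trans (List.map_id l)
  rw [← hl, List.reverse_flatten, hmap]
  exact (PL_le_length_of_flatten_eq (by simpa using hpal) rfl).trans (by simp)

theorem PL_reverse (w : List α) : PL w.reverse = PL w :=
  (PL_reverse_le w).antisymm (by simpa using PL_reverse_le w.reverse)

end

/-- Saarela's inequality: |PL(u) − PL(v)| ≤ PL(uv). -/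
theorem saarela_inequality {α : Type*} (u v : List α) :
    |(PL u : ℤ) - (PL v : ℤ)| ≤ (PL (u ++ v) : ℤ) := by
  have hu : PL u ≤ PL (u ++ v) + PL v := PL_le_PL_append_add_PL u v
  have hv : PL v ≤ PL (u ++ v) + PL u := by
    simpa only [← List.reverse_append, PL_reverse] using
      PL_le_PL_append_add_PL v.reverse u.reverse
  rw [abs_sub_le_iff]
  omega
end

section
/- For every k ≥ 0, the prefix of length 3^k of the Sierpinski word is a palindrome; more precisely, φ^k(a) = φ^(k−1)(a) · b^(3^(k−1)) · φ^(k−1)(a) for k ≥ 1, and φ^k(a) is a palindrome for all k. -/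
/-- The morphism φ : a → aba, b → bbb, with a = false, b = true. -/
def phi (w : List Bool) : List Bool :=
  w.flatMap fun c => if c then [true, true, true] else [false, true, false]

/-- The Sierpinski word, fixed point of φ starting with a: its (n+1)-st letter. -/
def sW (n : ℕ) : Bool := (phi^[n+1] [false]).getD n true

/-- The prefix s[1..n] of the Sierpinski word. -/
def sPrefix (n : ℕ) : List Bool := (List.range n).map sW

/-- qⱼ(n) = PL(bʲ s[1..n]). -/
noncomputable def qj (j n : ℕ) : ℕ := PL (List.replicate j true ++ sPrefix n)

/-- q(n) = min over j of qⱼ(n). -/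
noncomputable def qS (n : ℕ) : ℕ := sInf (Set.range fun j => qj j n)

/-- p(n) = PL(s[1..n]), the prefix palindromic length of the Sierpinski word. -/
noncomputable def pS (n : ℕ) : ℕ := PL (sPrefix n)

/-! Since φ(a) = aba and φ(b) = bbb = b³, applying φᵏ to aba gives
φᵏ⁺¹(a) = φᵏ(a) · b^(3ᵏ) · φᵏ(a), and palindromicity follows by induction on k. The words φᵏ(a)
form a chain of prefixes converging to s, so the prefix of s of length |φᵏ(a)| = 3ᵏ is φᵏ(a). -/

lemma phi_append (u v : List Bool) : phi (u ++ v) = phi u ++ phi v :=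
  List.flatMap_append

lemma phi_iterate_append (k : ℕ) (u v : List Bool) :
    phi^[k] (u ++ v) = phi^[k] u ++ phi^[k] v := by
  induction k generalizing u v with
  | zero => rfl
  | succ k ih => simp only [Function.iterate_succ_apply, phi_append, ih]

lemma phi_replicate_true (n : ℕ) : phi (List.replicate n true) = List.replicate (3 * n) true := by
  rw [phi, List.flatMap_replicate, if_pos rfl,
    show [true, true, true] = List.replicate 3 true from rfl, List.flatten_replicate_replicate,
    mul_comm]

lemma phi_iterate_replicate_true (k n : ℕ) :
    phi^[k] (List.replicate n true) = List.replicate (3 ^ k * n) true := by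
  induction k with
  | zero => simp
  | succ k ih => rw [Function.iterate_succ_apply', ih, phi_replicate_true, pow_succ', mul_assoc]

lemma phi_iterate_succ_false (k : ℕ) :
    phi^[k + 1] [false] = phi^[k] [false] ++ List.replicate (3 ^ k) true ++ phi^[k] [false] := by
  have h : phi^[k] [true] = List.replicate (3 ^ k) true := by
    simpa using phi_iterate_replicate_true k 1
  rw [Function.iterate_succ_apply, show phi [false] = [false] ++ [true] ++ [false] from rfl,
    phi_iterate_append, phi_iterate_append, h]

lemma length_phi_iterate_false (k : ℕ) : (phi^[k] [false]).length = 3 ^ k := by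
  induction k with
  | zero => rfl
  | succ k ih =>
    simp only [phi_iterate_succ_false, List.length_append, List.length_replicate, ih]
    ring

lemma isPal_phi_iterate_false (k : ℕ) : IsPal (phi^[k] [false]) := by
  induction k with
  | zero => rfl
  | succ k ih =>
    rw [IsPal] at ih ⊢
    simp [phi_iterate_succ_false, ih]

lemma phi_iterate_false_prefix {k m : ℕ} (h : k ≤ m) : phi^[k] [false] <+: phi^[m] [false] := by
  induction h with
  | refl => exact List.prefix_refl _
  | step _ ih =>
    rw [phi_iterate_succ_false, List.append_assoc]
    exact ih.trans (List.prefix_append _ _)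

lemma sW_eq_getElem {n k : ℕ} (h : n < (phi^[k] [false]).length) :
    sW n = (phi^[k] [false])[n] := by
  have hn : n < (phi^[n + 1] [false]).length := by
    rw [length_phi_iterate_false]
    exact (Nat.lt_pow_self (by norm_num)).trans (Nat.pow_lt_pow_right (by norm_num) n.lt_succ_self)
  rw [sW, List.getD_eq_getElem _ _ hn,
    (phi_iterate_false_prefix (le_max_left (n + 1) k)).getElem hn,
    (phi_iterate_false_prefix (le_max_right (n + 1) k)).getElem h]

lemma sPrefix_three_pow (k : ℕ) : sPrefix (3 ^ k) = phi^[k] [false] := by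
  apply List.ext_getElem
  · simp [sPrefix, length_phi_iterate_false]
  · intro n _ h
    simp only [sPrefix, List.getElem_map, List.getElem_range, sW_eq_getElem h]

/-- φᵏ(a) = φᵏ⁻¹(a) · b^(3^(k−1)) · φᵏ⁻¹(a) for k ≥ 1, φᵏ(a) is a palindrome for all k,
and the prefix of length 3ᵏ of the Sierpinski word is a palindrome. -/
theorem phi_iterate_palindrome :
    (∀ k : ℕ, 1 ≤ k →
      phi^[k] [false] =
        phi^[k-1] [false] ++ List.replicate (3 ^ (k-1)) true ++ phi^[k-1] [false]) ∧
    (∀ k : ℕ, IsPal (phi^[k] [false])) ∧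
    (∀ k : ℕ, IsPal (sPrefix (3 ^ k))) := by
  refine ⟨fun k hk => ?_, isPal_phi_iterate_false, fun k => ?_⟩
  · obtain ⟨k, rfl⟩ := Nat.exists_eq_add_of_le' hk
    exact phi_iterate_succ_false k
  · rw [sPrefix_three_pow]
    exact isPal_phi_iterate_false k
end

section
/- For every n with 2·3^k ≤ n ≤ 3^(k+1): p(n) = q(n) holds if and only if p(3^(k+1) − n) = q(3^(k+1) − n) and q(3^(k+1) − n) < q(n); otherwise p(n) = q(n) + 1. -/
/-!
On the top third 2·3ᵏ < n ≤ 3ᵏ⁺¹ of a window both recursions reflect n to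
b = 3ᵏ⁺¹ − n < n, so strong induction gives q ≤ p ≤ q + 1 everywhere. With a = n − 2·3ᵏ,
q n = min (1 + q a) (1 + q b) and p n = min (2 + q a) (1 + p b); knowing p b ∈ {q b, q b + 1},
comparing the two minima is linear arithmetic.
-/

lemma exists_three_pow_lt_le {m : ℕ} (hm : 2 ≤ m) : ∃ k, 3 ^ k < m ∧ m ≤ 3 ^ (k + 1) := by
  have hlow := Nat.pow_log_le_self 3 (show m - 1 ≠ 0 by omega)
  have hhigh := Nat.lt_pow_succ_log_self (by norm_num : 1 < 3) (m - 1)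
  exact ⟨Nat.log 3 (m - 1), by omega, by omega⟩

theorem le_and_le_add_one_of_recursions (q : ℕ → ℕ)
    (hq0 : q 0 = 0)
    (hq2 : ∀ k n : ℕ, 3 ^ k ≤ n → n ≤ 2 * 3 ^ k → q n = 1)
    (hq3 : ∀ k n : ℕ, 2 * 3 ^ k < n → n ≤ 3 ^ (k + 1) →
      q n = min (1 + q (n - 2 * 3 ^ k)) (1 + q (3 ^ (k + 1) - n)))
    (p : ℕ → ℕ)
    (hp0 : p 0 = 0)
    (hp1 : p 1 = 1)
    (hp2 : ∀ k n : ℕ, 3 ^ k < n → n ≤ 2 * 3 ^ k → p n = 2)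
    (hp3 : ∀ k n : ℕ, 2 * 3 ^ k < n → n ≤ 3 ^ (k + 1) →
      p n = min (2 + q (n - 2 * 3 ^ k)) (1 + p (3 ^ (k + 1) - n)))
    (m : ℕ) : q m ≤ p m ∧ p m ≤ q m + 1 := by
  induction m using Nat.strong_induction_on with
  | _ m ih =>
    obtain rfl | rfl | hm : m = 0 ∨ m = 1 ∨ 2 ≤ m := by omega
    · simp [hq0, hp0]
    · simp [hq2 0 1 le_rfl (by norm_num), hp1]
    · obtain ⟨k, hlow, hhigh⟩ := exists_three_pow_lt_le hm
      have h3 := pow_succ 3 k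
      rcases le_or_gt m (2 * 3 ^ k) with hmid | htop
      · rw [hq2 k m hlow.le hmid, hp2 k m hlow hmid]
        omega
      · have := ih (3 ^ (k + 1) - m) (by omega)
        rw [hq3 k m htop hhigh, hp3 k m htop hhigh]
        omega

lemma min_add_criterion {qa qb pb : ℕ} (hle : qb ≤ pb) (hle_succ : pb ≤ qb + 1) :
    (min (2 + qa) (1 + pb) = min (1 + qa) (1 + qb) ↔
      (pb = qb ∧ qb < min (1 + qa) (1 + qb))) ∧
    (¬(pb = qb ∧ qb < min (1 + qa) (1 + qb)) →
      min (2 + qa) (1 + pb) = min (1 + qa) (1 + qb) + 1) := by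
  omega

theorem p_eq_q_criterion_general (q : ℕ → ℕ)
    (hq0 : q 0 = 0)
    (hq2 : ∀ k n : ℕ, 3 ^ k ≤ n → n ≤ 2 * 3 ^ k → q n = 1)
    (hq3 : ∀ k n : ℕ, 2 * 3 ^ k < n → n ≤ 3 ^ (k + 1) →
      q n = min (1 + q (n - 2 * 3 ^ k)) (1 + q (3 ^ (k + 1) - n)))
    (p : ℕ → ℕ)
    (hp0 : p 0 = 0)
    (hp1 : p 1 = 1)
    (hp2 : ∀ k n : ℕ, 3 ^ k < n → n ≤ 2 * 3 ^ k → p n = 2)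
    (hp3 : ∀ k n : ℕ, 2 * 3 ^ k < n → n ≤ 3 ^ (k + 1) →
      p n = min (2 + q (n - 2 * 3 ^ k)) (1 + p (3 ^ (k + 1) - n)))
    (k n : ℕ) (h1 : 2 * 3 ^ k ≤ n) (h2 : n ≤ 3 ^ (k + 1)) :
    (p n = q n ↔
      (p (3 ^ (k + 1) - n) = q (3 ^ (k + 1) - n) ∧ q (3 ^ (k + 1) - n) < q n)) ∧
    (¬(p (3 ^ (k + 1) - n) = q (3 ^ (k + 1) - n) ∧ q (3 ^ (k + 1) - n) < q n) →
      p n = q n + 1) := by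
  have hb := le_and_le_add_one_of_recursions q hq0 hq2 hq3 p hp0 hp1 hp2 hp3 (3 ^ (k + 1) - n)
  have h3 := pow_succ 3 k
  have hpos : 0 < 3 ^ k := by positivity
  rcases h1.eq_or_lt with hn | htop
  · have hqn : q n = 1 := hq2 k n (by omega) hn.ge
    have hpn : p n = 2 := hp2 k n (by omega) hn.ge
    have hqb : q (3 ^ (k + 1) - n) = 1 := hq2 k (3 ^ (k + 1) - n) (by omega) (by omega)
    omega
  · rw [hq3 k n htop h2, hp3 k n htop h2]
    exact min_add_criterion hb.1 hb.2

/-- For 2·3ᵏ ≤ n ≤ 3ᵏ⁺¹: p(n) = q(n) if and only if p(3ᵏ⁺¹ − n) = q(3ᵏ⁺¹ − n)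
and q(3ᵏ⁺¹ − n) < q(n); otherwise p(n) = q(n) + 1. -/
theorem p_eq_q_criterion (q : ℕ → ℕ)
    (hq0 : q 0 = 0)
    (hq1 : q 1 = 1)
    (hq2 : ∀ k n : ℕ, 3 ^ k ≤ n → n ≤ 2 * 3 ^ k → q n = 1)
    (hq3 : ∀ k n : ℕ, 2 * 3 ^ k < n → n ≤ 3 ^ (k + 1) →
      q n = min (1 + q (n - 2 * 3 ^ k)) (1 + q (3 ^ (k + 1) - n)))
    (p : ℕ → ℕ)
    (hp0 : p 0 = 0)
    (hp1 : p 1 = 1)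
    (hp2 : ∀ k n : ℕ, 3 ^ k < n → n ≤ 2 * 3 ^ k → p n = 2)
    (hp3 : ∀ k n : ℕ, 2 * 3 ^ k < n → n ≤ 3 ^ (k + 1) →
      p n = min (2 + q (n - 2 * 3 ^ k)) (1 + p (3 ^ (k + 1) - n)))
    (k n : ℕ) (h1 : 2 * 3 ^ k ≤ n) (h2 : n ≤ 3 ^ (k + 1)) :
    (p n = q n ↔
      (p (3 ^ (k + 1) - n) = q (3 ^ (k + 1) - n) ∧ q (3 ^ (k + 1) - n) < q n)) ∧
    (¬(p (3 ^ (k + 1) - n) = q (3 ^ (k + 1) - n) ∧ q (3 ^ (k + 1) - n) < q n) →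
      p n = q n + 1) :=
  p_eq_q_criterion_general q hq0 hq2 hq3 p hp0 hp1 hp2 hp3 k n h1 h2
end

section
/- For every k ≥ 1 and 0 ≤ i ≤ 3^(k−1), the prefix of the Sierpinski word of length 3^(k−1) + i, preceded by b^i, forms a palindrome; in particular q(3^(k−1) + i) = 1, where q(n) = min_j PL(b^j s[1..n]). -/
/-! The prefix `S e := φᵉ(a)` of the Sierpinski word satisfies `S (e+1) = S e · b^(3^e) · S e`,
so it is a palindrome of length `3^e`, and for `i ≤ 3^e` the prefix of length `3^e + i` is
`S e · bⁱ`. Prepending `bⁱ` gives the palindrome `bⁱ · S e · bⁱ`, so `q = 1`, as no nonempty word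
has palindromic length 0. -/

theorem one_le_PL {α : Type*} {w : List α} (hw : w ≠ []) : 1 ≤ PL w := by
  have hsingletons : w.length ∈
      {k | ∃ l : List (List α), l.length = k ∧ (∀ p ∈ l, IsPal p) ∧ l.flatten = w} :=
    ⟨w.map ([·]), List.length_map _, fun _ hp => by obtain ⟨_, -, rfl⟩ := List.mem_map.mp hp; rfl,
      by rw [← List.flatMap_def, List.flatMap_singleton']⟩
  refine Nat.one_le_iff_ne_zero.mpr fun h0 => ?_
  rcases Nat.sInf_eq_zero.mp h0 with ⟨l, hl, -, hflat⟩ | hempty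
  · rw [List.length_eq_zero_iff.mp hl] at hflat
    exact hw hflat.symm
  · rw [hempty] at hsingletons
    exact hsingletons

theorem IsPal.PL_eq_one {α : Type*} {w : List α} (h : IsPal w) (hw : w ≠ []) : PL w = 1 :=
  le_antisymm (Nat.sInf_le ⟨[w], rfl, by simpa using h, by simp⟩) (one_le_PL hw)

theorem IsPal.append_reverse {α : Type*} {p : List α} (hp : IsPal p) (u : List α) :
    IsPal (u ++ p ++ u.reverse) := by
  have hp : p.reverse = p := hp
  simp only [IsPal, List.reverse_append, List.reverse_reverse, hp, List.append_assoc]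

theorem List.IsPrefix.getD_eq {α : Type*} {l₁ l₂ : List α} (h : l₁ <+: l₂) {n : ℕ}
    (hn : n < l₁.length) (d : α) : l₂.getD n d = l₁.getD n d := by
  obtain ⟨r, rfl⟩ := h
  exact List.getD_append _ _ _ _ hn

namespace Sierpinski

def block (e : ℕ) : List Bool := phi^[e] [false]

theorem phi_append (x y : List Bool) : phi (x ++ y) = phi x ++ phi y :=
  List.flatMap_append

theorem phi_replicate_true (n : ℕ) :
    phi (List.replicate n true) = List.replicate (3 * n) true := by
  induction n with
  | zero => rfl
  | succ n ih =>
    rw [List.replicate_succ, ← List.singleton_append, phi_append, ih, Nat.mul_succ,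
      Nat.add_comm, List.replicate_add]
    rfl

theorem block_succ_eq_phi (e : ℕ) : block (e + 1) = phi (block e) :=
  Function.iterate_succ_apply' ..

theorem block_succ (e : ℕ) :
    block (e + 1) = block e ++ List.replicate (3 ^ e) true ++ block e := by
  induction e with
  | zero => rfl
  | succ e ih =>
    rw [block_succ_eq_phi (e + 1), ih, phi_append, phi_append, phi_replicate_true,
      ← block_succ_eq_phi, ih, pow_succ', Nat.mul_comm]

theorem length_block (e : ℕ) : (block e).length = 3 ^ e := by
  induction e with
  | zero => rfl
  | succ e ih =>
    rw [block_succ]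
    simp only [List.length_append, List.length_replicate, ih]
    ring

theorem isPal_block (e : ℕ) : IsPal (block e) := by
  induction e with
  | zero => rfl
  | succ e ih =>
    have hrep : IsPal (List.replicate (3 ^ e) true) := List.reverse_replicate
    have := hrep.append_reverse (block e)
    rwa [show (block e).reverse = block e from ih, ← block_succ] at this

theorem block_prefix_block {e e' : ℕ} (h : e ≤ e') : block e <+: block e' := by
  induction e', h using Nat.le_induction with
  | base => exact List.prefix_rfl
  | succ e' _ ih =>
    rw [block_succ, List.append_assoc]
    exact ih.trans (List.prefix_append _ _)

theorem sW_eq_getD_block {e t : ℕ} (ht : t < 3 ^ e) : sW t = (block e).getD t true := by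
  have ht' : t < 3 ^ (t + 1) := (Nat.lt_succ_self t).trans (Nat.lt_pow_self (by norm_num))
  change (block (t + 1)).getD t true = _
  rcases le_total e (t + 1) with h | h
  · exact (block_prefix_block h).getD_eq (by rwa [length_block]) true
  · exact ((block_prefix_block h).getD_eq (by rwa [length_block]) true).symm

theorem sPrefix_eq_take_block {e n : ℕ} (hn : n ≤ 3 ^ e) : sPrefix n = (block e).take n := by
  apply List.ext_getElem
  · simp [sPrefix, length_block, hn]
  · intro t ht _
    have ht : t < n := by simpa [sPrefix] using ht
    simp only [sPrefix, List.getElem_map, List.getElem_range, List.getElem_take]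
    rw [sW_eq_getD_block (ht.trans_le hn), List.getD_eq_getElem]

theorem sPrefix_pow_add {e i : ℕ} (hi : i ≤ 3 ^ e) :
    sPrefix (3 ^ e + i) = block e ++ List.replicate i true := by
  have hle : 3 ^ e + i ≤ 3 ^ (e + 1) := by rw [pow_succ]; omega
  rw [sPrefix_eq_take_block hle, block_succ, List.append_assoc, ← length_block e,
    List.take_length_add_append, List.take_append_of_le_length (by simpa [length_block] using hi),
    List.take_replicate, Nat.min_eq_left (by simpa [length_block] using hi)]

theorem isPal_replicate_append_sPrefix {e i : ℕ} (hi : i ≤ 3 ^ e) :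
    IsPal (List.replicate i true ++ sPrefix (3 ^ e + i)) := by
  have := (isPal_block e).append_reverse (List.replicate i true)
  rwa [List.reverse_replicate, List.append_assoc, ← sPrefix_pow_add hi] at this

theorem sPrefix_ne_nil {n : ℕ} (hn : n ≠ 0) : sPrefix n ≠ [] := by
  simpa [sPrefix] using hn

end Sierpinski

open Sierpinski in
theorem q_eq_one_on_middle_range_general (k i : ℕ) (hi : i ≤ 3 ^ (k - 1)) :
    IsPal (List.replicate i true ++ sPrefix (3 ^ (k - 1) + i)) ∧
    qS (3 ^ (k - 1) + i) = 1 := by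
  have hpal := isPal_replicate_append_sPrefix hi
  have hne (j : ℕ) : List.replicate j true ++ sPrefix (3 ^ (k - 1) + i) ≠ [] := by
    simp [sPrefix_ne_nil (by positivity : 3 ^ (k - 1) + i ≠ 0)]
  refine ⟨hpal, le_antisymm (Nat.sInf_le ⟨i, hpal.PL_eq_one (hne i)⟩) ?_⟩
  exact le_csInf (Set.range_nonempty _) fun _ ⟨j, hj⟩ => hj ▸ one_le_PL (hne j)

/-- For every k ≥ 1 and 0 ≤ i ≤ 3^(k−1), the word bⁱ s[1..3^(k−1)+i] is a
palindrome; in particular q(3^(k−1) + i) = 1. -/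
theorem q_eq_one_on_middle_range (k i : ℕ) (hk : 1 ≤ k) (hi : i ≤ 3 ^ (k - 1)) :
    IsPal (List.replicate i true ++ sPrefix (3 ^ (k - 1) + i)) ∧
    qS (3 ^ (k - 1) + i) = 1 :=
  q_eq_one_on_middle_range_general k i hi
end
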